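/- Let A₁, …, A_m be nonnegative n×n real matrices, α₁, …, α_m > 0 with Σα_j = 1, define B_i as the Hadamard weighted geometric mean of the cyclic shift A_i, A_{i+1}, …, A_{i-1} with weights α₁,…,α_m, and set P_j = A_j A_{j+1} ⋯ A_m A₁ ⋯ A_{j-1}. Then ρ(B₁B₂⋯B_m) ≤ ρ(P₁^{(α₁)} ∘ P₂^{(α₂)} ∘ ⋯ ∘ P_m^{(α_m)}) ≤ ρ(A₁A₂⋯A_m). -/

import Mathlib

open Matrix

/-- Spectral radius of a real matrix: max modulus of its (complex) eigenvalues. -/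
noncomputable def specRad {N : Type*} [Fintype N] [DecidableEq N] (A : Matrix N N ℝ) : ℝ :=
  (spectralRadius ℂ (A.map Complex.ofReal)).toReal

/-- Operator norm induced by the Euclidean (ℓ²) norm. -/
noncomputable def l2OpNorm {N : Type*} [Fintype N] [DecidableEq N] (A : Matrix N N ℝ) : ℝ :=
  ‖Matrix.toEuclideanCLM (𝕜 := ℝ) A‖

/-- Entrywise α-th power (with the convention 0^0 = 1, as for `Real.rpow`). -/
noncomputable def hadPow {N : Type*} (A : Matrix N N ℝ) (α : ℝ) : Matrix N N ℝ :=
  fun i j => A i j ^ α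

/-- `B_i`: Hadamard weighted geometric mean of the cyclic shift starting at `i`. -/
noncomputable def cycGeo {m : ℕ} {N : Type*} (A : Fin m → Matrix N N ℝ) (α : Fin m → ℝ)
    (i : Fin m) : Matrix N N ℝ :=
  fun x y => ∏ k, (A (i + k) x y) ^ (α k)

/-- `P_j = A_j A_{j+1} ⋯ A_m A₁ ⋯ A_{j-1}`, the cyclic product starting at `j`. -/
noncomputable def cycProd {m : ℕ} {N : Type*} [Fintype N] [DecidableEq N]
    (A : Fin m → Matrix N N ℝ) (j : Fin m) : Matrix N N ℝ :=
  (List.ofFn fun k => A (j + k)).prod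

/-!
By Hölder's inequality the weighted Hadamard geometric mean `G(M) = M₁^{(α₁)} ∘ ⋯ ∘ M_m^{(α_m)}`
is entrywise supermultiplicative on nonnegative matrices: `G(X) G(Y) ≤ G(X₁Y₁, …, X_mY_m)`.
Iterating along the cyclic products gives `B₁ ⋯ B_m ≤ G(P)` and `G(P)ⁿ ≤ G(P₁ⁿ, …, P_mⁿ)`.
Hölder also bounds the `ℓ∞` operator norm of `G(M)` by `∏ ‖M_k‖^{α_k}`, so Gelfand's formula turns
these entrywise bounds into `ρ(B₁ ⋯ B_m) ≤ ρ(G(P)) ≤ ∏ ρ(P_k)^{α_k}`. Finally every `P_k` is a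
cyclic rotation of `A₁ ⋯ A_m`, and `ρ(XY) = ρ(YX)`.
-/

open Filter Topology MeasureTheory

theorem Real.sum_prod_rpow_le_prod_sum_rpow {ι Z : Type*} [Fintype ι] [Fintype Z]
    {α : ι → ℝ} (hα : ∀ k, 0 ≤ α k) (hsum : ∑ k, α k = 1)
    {f : ι → Z → ℝ} (hf : ∀ k z, 0 ≤ f k z) :
    ∑ z, ∏ k, f k z ^ α k ≤ ∏ k, (∑ z, f k z) ^ α k := by
  -- Hölder's inequality for the counting measure on `Z`.
  let _ : MeasurableSpace Z := ⊤
  have hS : ∀ k, 0 ≤ ∑ z, f k z := fun k => Finset.sum_nonneg fun z _ => hf k z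
  have h := ENNReal.lintegral_prod_norm_pow_le (μ := Measure.count) Finset.univ
    (f := fun k z => ENNReal.ofReal (f k z)) (fun _ _ => Measurable.of_discrete.aemeasurable) hsum
    (fun k _ => hα k)
  simp only [lintegral_fintype, Measure.count_singleton, mul_one] at h
  have hL : ENNReal.ofReal (∑ z, ∏ k, f k z ^ α k) = ∑ z, ∏ k, ENNReal.ofReal (f k z) ^ α k := by
    rw [ENNReal.ofReal_sum_of_nonneg fun z _ =>
      Finset.prod_nonneg fun k _ => Real.rpow_nonneg (hf k z) _]
    refine Finset.sum_congr rfl fun z _ => ?_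
    rw [ENNReal.ofReal_prod_of_nonneg fun k _ => Real.rpow_nonneg (hf k z) _]
    exact Finset.prod_congr rfl fun k _ => (ENNReal.ofReal_rpow_of_nonneg (hf k z) (hα k)).symm
  have hR : ENNReal.ofReal (∏ k, (∑ z, f k z) ^ α k) =
      ∏ k, (∑ z, ENNReal.ofReal (f k z)) ^ α k := by
    rw [ENNReal.ofReal_prod_of_nonneg fun k _ => Real.rpow_nonneg (hS k) _]
    refine Finset.prod_congr rfl fun k _ => ?_
    rw [← ENNReal.ofReal_sum_of_nonneg fun z _ => hf k z,
      ENNReal.ofReal_rpow_of_nonneg (hS k) (hα k)]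
  rwa [← hL, ← hR, ENNReal.ofReal_le_ofReal_iff
    (Finset.prod_nonneg fun k _ => Real.rpow_nonneg (hS k) _)] at h

theorem Real.prod_rpow_of_sum_eq_one {ι : Type*} [Fintype ι] {a : ℝ} (ha : 0 ≤ a) {α : ι → ℝ}
    (hα : ∀ k, 0 ≤ α k) (hsum : ∑ k, α k = 1) : ∏ k, a ^ α k = a := by
  rw [← Real.rpow_sum_of_nonneg ha fun k _ => hα k, hsum, Real.rpow_one]

theorem spectralRadius_mul_comm {𝕜 A : Type*} [NormedField 𝕜] [Ring A] [Algebra 𝕜 A] (a b : A) :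
    spectralRadius 𝕜 (a * b) = spectralRadius 𝕜 (b * a) := by
  -- `0` contributes nothing to the supremum, and `σ(ab) \ {0} = σ(ba) \ {0}`.
  have h : ∀ c : A,
      spectralRadius 𝕜 c = ⨆ k ∈ insert 0 (spectrum 𝕜 c \ {0}), (‖k‖₊ : ENNReal) := by
    intro c
    rw [Set.insert_sdiff_singleton, iSup_insert]
    simp [spectralRadius]
  rw [h, h, spectrum.nonzero_mul_comm]

theorem List.ofFn_add_eq_rotate {α : Type*} {m : ℕ} (f : Fin m → α) (j : Fin m) :
    List.ofFn (fun k => f (j + k)) = (List.ofFn f).rotate j := by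
  refine List.ext_getElem (by simp) fun k _ _ => ?_
  simp only [List.getElem_ofFn, List.getElem_rotate, List.length_ofFn]
  congr 1
  ext
  simp [Fin.val_add, add_comm]

section CyclicProduct

variable {N : Type*} [Fintype N] [DecidableEq N]

theorem specRad_nonneg (X : Matrix N N ℝ) : 0 ≤ specRad X :=
  ENNReal.toReal_nonneg

theorem specRad_mul_comm (X Y : Matrix N N ℝ) : specRad (X * Y) = specRad (Y * X) := by
  have hmul : ∀ X Y : Matrix N N ℝ,
      (X * Y).map Complex.ofReal = X.map Complex.ofReal * Y.map Complex.ofReal :=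
    map_mul Complex.ofRealHom.mapMatrix
  rw [specRad, specRad, hmul, hmul, spectralRadius_mul_comm]

theorem specRad_cycProd {m : ℕ} (A : Fin m → Matrix N N ℝ) (j : Fin m) :
    specRad (cycProd A j) = specRad (List.ofFn A).prod := by
  rw [cycProd, List.ofFn_add_eq_rotate,
    List.rotate_eq_drop_append_take (by simp [j.isLt.le]), List.prod_append,
    specRad_mul_comm, ← List.prod_append, List.take_append_drop]

end CyclicProduct

namespace Matrix

variable {l m n ι : Type*} [Fintype ι]

noncomputable def hadamardGeomMean (α : ι → ℝ) (M : ι → Matrix m n ℝ) : Matrix m n ℝ :=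
  fun x y => ∏ k, M k x y ^ α k

theorem hadamardGeomMean_nonneg (α : ι → ℝ) {M : ι → Matrix m n ℝ}
    (hM : ∀ k i j, 0 ≤ M k i j) (i : m) (j : n) : 0 ≤ hadamardGeomMean α M i j :=
  Finset.prod_nonneg fun k _ => Real.rpow_nonneg (hM k i j) _

theorem one_apply_nonneg [DecidableEq m] (i j : m) : 0 ≤ (1 : Matrix m m ℝ) i j := by
  rw [one_apply]
  split_ifs <;> norm_num

theorem mul_apply_nonneg [Fintype m] {X : Matrix l m ℝ} {Y : Matrix m n ℝ}
    (hX : ∀ i j, 0 ≤ X i j) (hY : ∀ i j, 0 ≤ Y i j) (i : l) (j : n) : 0 ≤ (X * Y) i j :=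
  Finset.sum_nonneg fun z _ => mul_nonneg (hX i z) (hY z j)

theorem mul_apply_le_mul_apply [Fintype m] {X X' : Matrix l m ℝ} {Y Y' : Matrix m n ℝ}
    (hX : ∀ i j, 0 ≤ X i j) (hY : ∀ i j, 0 ≤ Y i j)
    (hXX' : ∀ i j, X i j ≤ X' i j) (hYY' : ∀ i j, Y i j ≤ Y' i j) (i : l) (j : n) :
    (X * Y) i j ≤ (X' * Y') i j :=
  Finset.sum_le_sum fun z _ =>
    mul_le_mul (hXX' i z) (hYY' z j) (hY z j) ((hX i z).trans (hXX' i z))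

theorem list_prod_ofFn_apply_nonneg [Fintype m] [DecidableEq m] {r : ℕ}
    {X : Fin r → Matrix m m ℝ} (hX : ∀ i x y, 0 ≤ X i x y) (x y : m) :
    0 ≤ (List.ofFn X).prod x y := by
  induction r generalizing x y with
  | zero =>
    rw [List.ofFn_zero, List.prod_nil]
    exact one_apply_nonneg x y
  | succ r ih =>
    rw [List.ofFn_succ, List.prod_cons]
    exact mul_apply_nonneg (hX 0) (ih fun i => hX i.succ) x y

theorem pow_apply_le_pow_apply [Fintype m] [DecidableEq m] {X Y : Matrix m m ℝ}
    (hX : ∀ i j, 0 ≤ X i j) (hXY : ∀ i j, X i j ≤ Y i j) (k : ℕ) (i j : m) :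
    (X ^ k) i j ≤ (Y ^ k) i j := by
  induction k generalizing i j with
  | zero => rfl
  | succ k ih =>
    rw [pow_succ, pow_succ]
    exact mul_apply_le_mul_apply (pow_apply_nonneg hX k) hX ih hXY i j

variable {α : ι → ℝ}

theorem hadamardGeomMean_mul_hadamardGeomMean_apply_le [Fintype m] (hα : ∀ k, 0 ≤ α k)
    (hsum : ∑ k, α k = 1) {X : ι → Matrix l m ℝ} {Y : ι → Matrix m n ℝ}
    (hX : ∀ k i j, 0 ≤ X k i j) (hY : ∀ k i j, 0 ≤ Y k i j) (i : l) (j : n) :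
    (hadamardGeomMean α X * hadamardGeomMean α Y) i j ≤
      hadamardGeomMean α (fun k => X k * Y k) i j :=
  calc (hadamardGeomMean α X * hadamardGeomMean α Y) i j
      = ∑ z, ∏ k, (X k i z * Y k z j) ^ α k := by
        refine Finset.sum_congr rfl fun z _ => ?_
        simp only [hadamardGeomMean, ← Finset.prod_mul_distrib,
          Real.mul_rpow (hX _ i z) (hY _ z j)]
    _ ≤ ∏ k, (∑ z, X k i z * Y k z j) ^ α k :=
        Real.sum_prod_rpow_le_prod_sum_rpow hα hsum fun k z => mul_nonneg (hX k i z) (hY k z j)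

theorem list_prod_ofFn_hadamardGeomMean_apply_le [Fintype m] [DecidableEq m]
    (hα : ∀ k, 0 ≤ α k) (hsum : ∑ k, α k = 1) {r : ℕ} {D : Fin r → ι → Matrix m m ℝ}
    (hD : ∀ i k x y, 0 ≤ D i k x y) (x y : m) :
    (List.ofFn fun i => hadamardGeomMean α (D i)).prod x y ≤
      hadamardGeomMean α (fun k => (List.ofFn fun i => D i k).prod) x y := by
  induction r generalizing x y with
  | zero =>
    simp only [List.ofFn_zero, List.prod_nil, hadamardGeomMean,
      Real.prod_rpow_of_sum_eq_one (one_apply_nonneg x y) hα hsum, le_refl]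
  | succ r ih =>
    simp only [List.ofFn_succ, List.prod_cons]
    refine (mul_apply_le_mul_apply (hadamardGeomMean_nonneg α (hD 0))
      (list_prod_ofFn_apply_nonneg fun i => hadamardGeomMean_nonneg α (hD i.succ))
      (fun _ _ => le_rfl) (ih fun i => hD i.succ) x y).trans ?_
    exact hadamardGeomMean_mul_hadamardGeomMean_apply_le hα hsum (hD 0)
      (fun k => list_prod_ofFn_apply_nonneg fun i => hD i.succ k) x y

theorem hadamardGeomMean_pow_apply_le [Fintype m] [DecidableEq m] (hα : ∀ k, 0 ≤ α k)
    (hsum : ∑ k, α k = 1) {P : ι → Matrix m m ℝ} (hP : ∀ k i j, 0 ≤ P k i j) (r : ℕ) (x y : m) :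
    (hadamardGeomMean α P ^ r) x y ≤ hadamardGeomMean α (fun k => P k ^ r) x y := by
  simpa only [List.ofFn_const, List.prod_replicate] using
    list_prod_ofFn_hadamardGeomMean_apply_le hα hsum (D := fun _ : Fin r => P) (fun _ => hP) x y

end Matrix

section LinftyOpNorm

attribute [local instance] Matrix.linftyOpNormedAddCommGroup Matrix.linftyOpNormedRing
  Matrix.linftyOpNormedAlgebra

namespace Matrix

variable {m n ι : Type*} [Fintype m] [Fintype n]

theorem linfty_opNorm_le_iff {𝕜 : Type*} [NormedAddCommGroup 𝕜] {A : Matrix m n 𝕜} {c : ℝ}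
    (hc : 0 ≤ c) : ‖A‖ ≤ c ↔ ∀ i, ∑ j, ‖A i j‖ ≤ c := by
  change ‖fun i => WithLp.toLp 1 (A i)‖ ≤ c ↔ _
  simp only [pi_norm_le_iff_of_nonneg hc, PiLp.norm_eq_of_L1]

theorem sum_norm_apply_le_linfty_opNorm {𝕜 : Type*} [NormedAddCommGroup 𝕜] (A : Matrix m n 𝕜)
    (i : m) : ∑ j, ‖A i j‖ ≤ ‖A‖ :=
  (linfty_opNorm_le_iff (norm_nonneg A)).mp le_rfl i

theorem linfty_opNorm_map_ofReal (X : Matrix m n ℝ) : ‖X.map Complex.ofReal‖ = ‖X‖ := by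
  simp [linfty_opNorm_def]

theorem linfty_opNorm_le_of_nonneg_of_le {X Y : Matrix m n ℝ} (hX : ∀ i j, 0 ≤ X i j)
    (hXY : ∀ i j, X i j ≤ Y i j) : ‖X‖ ≤ ‖Y‖ := by
  refine (linfty_opNorm_le_iff (norm_nonneg Y)).mpr fun i => ?_
  refine le_trans (Finset.sum_le_sum fun j _ => ?_) (sum_norm_apply_le_linfty_opNorm Y i)
  rw [Real.norm_of_nonneg (hX i j), Real.norm_of_nonneg ((hX i j).trans (hXY i j))]
  exact hXY i j

theorem linfty_opNorm_hadamardGeomMean_le [Fintype ι] {α : ι → ℝ} (hα : ∀ k, 0 ≤ α k)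
    (hsum : ∑ k, α k = 1) {M : ι → Matrix m n ℝ} (hM : ∀ k i j, 0 ≤ M k i j) :
    ‖hadamardGeomMean α M‖ ≤ ∏ k, ‖M k‖ ^ α k := by
  refine (linfty_opNorm_le_iff (Finset.prod_nonneg fun k _ => by positivity)).mpr fun i => ?_
  calc ∑ j, ‖hadamardGeomMean α M i j‖ = ∑ j, ∏ k, M k i j ^ α k :=
        Finset.sum_congr rfl fun j _ => Real.norm_of_nonneg (hadamardGeomMean_nonneg α hM i j)
    _ ≤ ∏ k, (∑ j, M k i j) ^ α k := Real.sum_prod_rpow_le_prod_sum_rpow hα hsum (hM · i)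
    _ ≤ ∏ k, ‖M k‖ ^ α k := by
        have hrow : ∀ k, 0 ≤ ∑ j, M k i j := fun k => Finset.sum_nonneg fun j _ => hM k i j
        refine Finset.prod_le_prod (fun k _ => Real.rpow_nonneg (hrow k) _) fun k _ => ?_
        refine Real.rpow_le_rpow (hrow k) ?_ (hα k)
        simpa only [Real.norm_of_nonneg (hM k i _)] using sum_norm_apply_le_linfty_opNorm (M k) i

end Matrix

variable {N : Type*} [Fintype N] [DecidableEq N]

theorem tendsto_norm_pow_rpow_specRad (X : Matrix N N ℝ) :
    Tendsto (fun n : ℕ => ‖X ^ n‖ ^ (1 / n : ℝ)) atTop (𝓝 (specRad X)) := by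
  -- The `n = 0` case of `ρ(a) ≤ ‖aⁿ⁺¹‖^(1/(n+1)) ‖1‖^(1/(n+1))`; unlike `ρ(a) ≤ ‖a‖`, it does
  -- not need `‖1‖ = 1`, which fails for empty `N`.
  have hfin : spectralRadius ℂ (X.map Complex.ofReal) ≠ ⊤ :=
    ((spectrum.spectralRadius_le_pow_nnnorm_pow_one_div ℂ _ 0).trans_lt (by finiteness)).ne
  refine ((ENNReal.tendsto_toReal hfin).comp
    (spectrum.pow_norm_pow_one_div_tendsto_nhds_spectralRadius _)).congr fun n => ?_
  rw [Function.comp_apply, ENNReal.toReal_ofReal (by positivity),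
    ← Matrix.linfty_opNorm_map_ofReal (X ^ n)]
  exact congr_arg (‖·‖ ^ (1 / n : ℝ)) (map_pow Complex.ofRealHom.mapMatrix X n).symm

theorem specRad_le_specRad_of_nonneg_of_le {X Y : Matrix N N ℝ} (hX : ∀ i j, 0 ≤ X i j)
    (hXY : ∀ i j, X i j ≤ Y i j) : specRad X ≤ specRad Y :=
  le_of_tendsto_of_tendsto' (tendsto_norm_pow_rpow_specRad X) (tendsto_norm_pow_rpow_specRad Y)
    fun n => Real.rpow_le_rpow (norm_nonneg _)
      (linfty_opNorm_le_of_nonneg_of_le (pow_apply_nonneg hX n) (pow_apply_le_pow_apply hX hXY n))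
      (by positivity)

theorem specRad_hadamardGeomMean_le {ι : Type*} [Fintype ι] {α : ι → ℝ} (hα : ∀ k, 0 ≤ α k)
    (hsum : ∑ k, α k = 1) {P : ι → Matrix N N ℝ} (hP : ∀ k i j, 0 ≤ P k i j) :
    specRad (hadamardGeomMean α P) ≤ ∏ k, specRad (P k) ^ α k := by
  have hlim : Tendsto (fun n : ℕ => ∏ k, (‖P k ^ n‖ ^ (1 / n : ℝ)) ^ α k) atTop
      (𝓝 (∏ k, specRad (P k) ^ α k)) :=
    tendsto_finsetProd _ fun k _ =>
      (Real.continuousAt_rpow_const _ _ (Or.inr (hα k))).tendsto.comp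
        (tendsto_norm_pow_rpow_specRad (P k))
  refine le_of_tendsto_of_tendsto' (tendsto_norm_pow_rpow_specRad _) hlim fun n => ?_
  have hPn : ∀ k i j, 0 ≤ (P k ^ n) i j := fun k => pow_apply_nonneg (hP k) n
  have hnorm : ‖hadamardGeomMean α P ^ n‖ ≤ ∏ k, ‖P k ^ n‖ ^ α k :=
    (linfty_opNorm_le_of_nonneg_of_le (pow_apply_nonneg (hadamardGeomMean_nonneg α hP) n)
      (hadamardGeomMean_pow_apply_le hα hsum hP n)).trans
      (linfty_opNorm_hadamardGeomMean_le hα hsum hPn)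
  calc ‖hadamardGeomMean α P ^ n‖ ^ (1 / n : ℝ) ≤ (∏ k, ‖P k ^ n‖ ^ α k) ^ (1 / n : ℝ) :=
        Real.rpow_le_rpow (norm_nonneg _) hnorm (by positivity)
    _ = ∏ k, (‖P k ^ n‖ ^ (1 / n : ℝ)) ^ α k := by
        rw [← Real.finsetProd_rpow _ _ fun k _ => by positivity]
        simp only [← Real.rpow_mul (norm_nonneg _), mul_comm]

end LinftyOpNorm

theorem stmt7_general {m : ℕ} {N : Type*} [Fintype N] [DecidableEq N]
    (A : Fin m → Matrix N N ℝ) (hA : ∀ k, ∀ i j, 0 ≤ A k i j)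
    (α : Fin m → ℝ) (hα : ∀ k, 0 < α k) (hsum : ∑ k, α k = 1) :
    specRad (List.ofFn (cycGeo A α)).prod ≤
        specRad (fun i j => ∏ k, (cycProd A k i j) ^ (α k)) ∧
      specRad (fun i j => ∏ k, (cycProd A k i j) ^ (α k)) ≤ specRad (List.ofFn A).prod := by
  have hα₀ : ∀ k, 0 ≤ α k := fun k => (hα k).le
  have hP : ∀ k i j, 0 ≤ cycProd A k i j := fun k =>
    list_prod_ofFn_apply_nonneg fun i => hA (k + i)
  have hB : ∀ i j, (List.ofFn (cycGeo A α)).prod i j ≤ hadamardGeomMean α (cycProd A) i j := by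
    intro x y
    refine (list_prod_ofFn_hadamardGeomMean_apply_le hα₀ hsum (D := fun i k => A (i + k))
      (fun _ _ => hA _) x y).trans_eq ?_
    simp only [add_comm]
    rfl
  refine ⟨specRad_le_specRad_of_nonneg_of_le
    (list_prod_ofFn_apply_nonneg fun i => hadamardGeomMean_nonneg α fun k => hA (i + k)) hB, ?_⟩
  calc specRad (hadamardGeomMean α (cycProd A))
      ≤ ∏ k, specRad (cycProd A k) ^ α k := specRad_hadamardGeomMean_le hα₀ hsum hP
    _ = specRad (List.ofFn A).prod := by
        simp only [specRad_cycProd]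
        exact Real.prod_rpow_of_sum_eq_one (specRad_nonneg _) hα₀ hsum

theorem stmt7 {m : ℕ} (hm : 0 < m) {N : Type*} [Fintype N] [DecidableEq N]
    (A : Fin m → Matrix N N ℝ) (hA : ∀ k, ∀ i j, 0 ≤ A k i j)
    (α : Fin m → ℝ) (hα : ∀ k, 0 < α k) (hsum : ∑ k, α k = 1) :
    specRad (List.ofFn (cycGeo A α)).prod ≤
        specRad (fun i j => ∏ k, (cycProd A k i j) ^ (α k)) ∧
      specRad (fun i j => ∏ k, (cycProd A k i j) ^ (α k)) ≤ specRad (List.ofFn A).prod :=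
  stmt7_general A hA α hα hsum
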